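/- Let R ⊆ T ⊂ U be an extension of integral domains such that Spec(R) = Spec(T). Then R is a pseudo-valuation subring of U if and only if T is a pseudo-valuation subring of U. -/

import Mathlib

/-!
The nonunits of a ring are the union of its maximal ideals, so `Spec(R) = Spec(T)` forces `R`
and `T` to have the same nonunits. If `R` is PV in `U`, so is `T ⊇ R`: a nonunit of `T` is a
nonunit of `R`, and `x ∉ T` implies `x ∉ R`. Conversely, let `T` be PV in `U`, `x ∉ R` and `a` a
nonunit of `R`. If `x ∈ T`, then `x` is a unit of `T` (its nonunits lie in `R`) and
`a = (a x⁻¹) x` with `a x⁻¹` a nonunit of `T`; if `x ∉ T`, then `a = r x` with `r ∈ T`, and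
`r` is a nonunit of `T` since otherwise `x = r⁻¹ a ∈ T`. Either way the factor is a nonunit of
`T`, hence lies in `R`.
-/

/-- A subset `S` of a ring `A` is (the underlying set of) a prime ideal of the subring `B`. -/
def IsPrimeIdealSetOf {A : Type*} [CommRing A] (B : Subring A) (S : Set A) : Prop :=
  ∃ I : Ideal B, I.IsPrime ∧ Subtype.val '' (I : Set B) = S

/-- `Spec(R) = Spec(T)` for two subrings of a common ring: a subset is a prime ideal of `R`
iff it is a prime ideal of `T`. -/
def SpecEqSub {A : Type*} [CommRing A] (R T : Subring A) : Prop :=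
  ∀ S : Set A, IsPrimeIdealSetOf R S ↔ IsPrimeIdealSetOf T S

/-- `R` is a pseudo-valuation subring (PV) of the integral domain `U`: for every
`x ∈ U \ R` and every non-unit `a` of `R`, the element `x⁻¹a` (inverse taken in the
fraction field of `U`) belongs to `R`; equivalently, `a = r * x` for some `r ∈ R`. -/
def IsPVIn {U : Type*} [CommRing U] [IsDomain U] (R : Subring U) : Prop :=
  ∀ x : U, x ∉ R → ∀ a : ↥R, ¬ IsUnit a → ∃ r ∈ R, (a : U) = r * x

section Nonunits

variable {A : Type*} [CommRing A] {P Q : Subring A}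

theorem image_nonunits_subset_of_isPrimeIdealSetOf_imp
    (h : ∀ S : Set A, IsPrimeIdealSetOf P S → IsPrimeIdealSetOf Q S) :
    Subtype.val '' nonunits P ⊆ Subtype.val '' nonunits Q := by
  rintro _ ⟨p, hp, rfl⟩
  obtain ⟨M, hM, hpM⟩ := exists_max_ideal_of_mem_nonunits hp
  obtain ⟨J, hJ, hJM⟩ := h _ ⟨M, hM.isPrime, rfl⟩
  obtain ⟨q, hqJ, hqp⟩ : (p : A) ∈ Subtype.val '' (J : Set Q) := hJM ▸ ⟨p, hpM, rfl⟩
  exact ⟨q, fun hq => hJ.ne_top (J.eq_top_of_isUnit_mem hqJ hq), hqp⟩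

theorem SpecEqSub.image_nonunits_eq (h : SpecEqSub P Q) :
    Subtype.val '' nonunits P = Subtype.val '' nonunits Q :=
  (image_nonunits_subset_of_isPrimeIdealSetOf_imp fun S => (h S).mp).antisymm
    (image_nonunits_subset_of_isPrimeIdealSetOf_imp fun S => (h S).mpr)

theorem mem_of_not_isUnit_of_image_nonunits_subset
    (h : Subtype.val '' nonunits Q ⊆ Subtype.val '' nonunits P) {q : Q} (hq : ¬IsUnit q) :
    (q : A) ∈ P := by
  obtain ⟨p, -, hpq⟩ := h ⟨q, hq, rfl⟩
  exact hpq ▸ p.2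

theorem Subring.mem_of_isUnit_of_mul_mem {t : Q} (ht : IsUnit t) {x : A}
    (hx : (t : A) * x ∈ Q) : x ∈ Q := by
  obtain ⟨u, rfl⟩ := ht
  have hux : ((↑u⁻¹ * ⟨_, hx⟩ : Q) : A) = x := by
    change ((↑u⁻¹ : Q) : A) * ((u : Q) * x) = x
    rw [← mul_assoc, ← Subring.coe_mul, Units.inv_mul, Subring.coe_one, one_mul]
  exact hux ▸ Subtype.property _

end Nonunits

section PseudoValuation

variable {U : Type*} [CommRing U] [IsDomain U] {R T : Subring U}

theorem IsPVIn.of_le (hR : IsPVIn R) (hRT : R ≤ T)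
    (hTR : Subtype.val '' nonunits T ⊆ Subtype.val '' nonunits R) : IsPVIn T := by
  intro x hxT a ha
  obtain ⟨b, hb, hba⟩ := hTR ⟨a, ha, rfl⟩
  obtain ⟨r, hr, hrx⟩ := hR x (fun hxR => hxT (hRT hxR)) b hb
  exact ⟨r, hRT hr, hba ▸ hrx⟩

theorem IsPVIn.of_image_nonunits_eq (hT : IsPVIn T)
    (hN : Subtype.val '' nonunits R = Subtype.val '' nonunits T) : IsPVIn R := by
  intro x hxR a ha
  obtain ⟨a', ha', haa'⟩ := hN.le ⟨a, ha, rfl⟩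
  have hmem : ∀ t : T, ¬IsUnit t → (t : U) ∈ R :=
    fun _ => mem_of_not_isUnit_of_image_nonunits_subset hN.ge
  by_cases hxT : x ∈ T
  · obtain ⟨u, hu⟩ : IsUnit (⟨x, hxT⟩ : T) := by
      by_contra hx
      exact hxR (hmem _ hx)
    refine ⟨((a' * ↑u⁻¹ : T) : U), hmem _ fun h => ha' ?_, ?_⟩
    · exact (Units.isUnit_mul_units a' u⁻¹).mp h
    · rw [← haa', ← congrArg Subtype.val (Units.inv_mul_cancel_right a' u), hu]
      rfl
  · obtain ⟨r, hrT, hrx⟩ := hT x hxT a' ha'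
    refine ⟨r, hmem ⟨r, hrT⟩ fun hr => hxT ?_, haa' ▸ hrx⟩
    exact Subring.mem_of_isUnit_of_mul_mem hr (hrx ▸ a'.2)

end PseudoValuation

theorem stmt1 {U : Type*} [CommRing U] [IsDomain U] (R T : Subring U)
    (hRT : R ≤ T) (hspec : SpecEqSub R T) :
    IsPVIn R ↔ IsPVIn T :=
  ⟨fun hR => hR.of_le hRT hspec.image_nonunits_eq.ge,
    fun hT => hT.of_image_nonunits_eq hspec.image_nonunits_eq⟩
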